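/- With A and J the n×n complex matrices defined in the context, for every t ∈ ℝ one has exp(t·A) = I − J + cos(t)·J + sin(t)·A, where I is the n×n identity matrix and exp denotes the matrix exponential. -/

import Mathlib

open Matrix

/-!
The matrices satisfy `A * A = -J` and `A * J = A`: on the range of the projection `J`, spanned by
`e₀` and `(0, v)`, the matrix `A` acts as a rotation generator, and it kills the complement. Hence
`A ^ (2k+1) = (-1)^k A` and `A ^ (2k+2) = (-1)^(k+1) J`, so the exponential series of `t • A` splits
into `1 - J` plus the cosine series times `J` plus the sine series times `A`.
-/

section RotationGenerator

variable {R : Type*} [Ring R] {A J : R}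

theorem pow_two_mul_add_one_of_mul_self_eq_neg (hA2 : A * A = -J) (hAJ : A * J = A) (k : ℕ) :
    A ^ (2 * k + 1) = (-1) ^ k * A := by
  induction k with
  | zero => simp
  | succ k ih =>
    rw [show 2 * (k + 1) + 1 = 2 * k + 1 + 2 by ring, pow_add, ih, sq, mul_assoc, hA2, mul_neg,
      hAJ, pow_succ, mul_neg_one, neg_mul, mul_neg]

theorem pow_two_mul_succ_of_mul_self_eq_neg (hA2 : A * A = -J) (hAJ : A * J = A) (k : ℕ) :
    A ^ (2 * (k + 1)) = (-1) ^ (k + 1) * J := by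
  rw [mul_add, mul_one, pow_succ, pow_two_mul_add_one_of_mul_self_eq_neg hA2 hAJ, mul_assoc, hA2,
    pow_succ, mul_neg_one, neg_mul, mul_neg]

variable [Algebra ℝ R] [TopologicalSpace R] [IsTopologicalRing R] [ContinuousSMul ℝ R] [T2Space R]

theorem exp_smul_eq_of_mul_self_eq_neg (hA2 : A * A = -J) (hAJ : A * J = A) (t : ℝ) :
    NormedSpace.exp (t • A) = 1 - J + Real.cos t • J + Real.sin t • A := by
  have hterm (m k : ℕ) (B : R) (hB : A ^ m = (-1) ^ k * B) :
      (m.factorial⁻¹ : ℝ) • (t • A) ^ m = ((-1) ^ k * t ^ m / m.factorial) • B := by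
    have hsign : ((-1) ^ k * B : R) = ((-1 : ℝ) ^ k) • B := by simp [Algebra.smul_def]
    rw [smul_pow, hB, hsign, smul_smul, smul_smul]
    congr 1
    ring
  have heven : HasSum (fun k ↦ ((2 * k).factorial⁻¹ : ℝ) • (t • A) ^ (2 * k))
      (Real.cos t • J + (1 - J)) := by
    convert ((Real.hasSum_cos t).smul_const J).add (hasSum_ite_eq 0 (1 - J)) using 1
    funext k
    rcases k with _ | k
    · simp
    · rw [if_neg k.succ_ne_zero, add_zero,
        hterm _ _ _ (pow_two_mul_succ_of_mul_self_eq_neg hA2 hAJ k)]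
  have hodd : HasSum (fun k ↦ ((2 * k + 1).factorial⁻¹ : ℝ) • (t • A) ^ (2 * k + 1))
      (Real.sin t • A) := by
    convert (Real.hasSum_sin t).smul_const A using 1
    funext k
    rw [hterm _ _ _ (pow_two_mul_add_one_of_mul_self_eq_neg hA2 hAJ k)]
  rw [congrFun (NormedSpace.exp_eq_tsum ℝ) (t • A),
    (HasSum.even_add_odd (f := fun m ↦ (m.factorial⁻¹ : ℝ) • (t • A) ^ m) heven hodd).tsum_eq]
  abel

end RotationGenerator

theorem replicateRow_mul_replicateCol_eq_smul_one {ι m α : Type*} [Unique ι] [DecidableEq ι]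
    [Fintype m] [Semiring α] (v w : m → α) :
    replicateRow ι v * replicateCol ι w = (v ⬝ᵥ w) • 1 := by
  ext i j
  rw [Subsingleton.elim i j]
  simp

section BlockRotation

variable {K m p : Type*} [Field K] [Fintype m] [Fintype p] [DecidableEq m]
  {r : Matrix m p K} {c : Matrix p m K} {S z : K}

theorem fromBlocks_mul_self_eq_neg (hrc : r * c = S • 1) (hS : S ≠ 0) (hz : z * z = S - 1) :
    fromBlocks (z • 1) (-r) c (-(z / S) • (c * r)) * fromBlocks (z • 1) (-r) c (-(z / S) • (c * r))
      = -fromBlocks 1 0 0 (S⁻¹ • (c * r)) := by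
  have hcrc : c * r * c = S • c := by rw [Matrix.mul_assoc, hrc, Matrix.mul_smul, Matrix.mul_one]
  have hrcr : r * (c * r) = S • r := by
    rw [← Matrix.mul_assoc, hrc, Matrix.smul_mul, Matrix.one_mul]
  have hcrcr : c * r * (c * r) = S • (c * r) := by
    rw [← Matrix.mul_assoc, hcrc, Matrix.smul_mul]
  rw [fromBlocks_multiply, fromBlocks_neg]
  congr 1
  · simp only [Algebra.mul_smul_comm, mul_one, smul_smul, hz, sub_smul, one_smul, Matrix.neg_mul,
      hrc]
    abel
  · simp [hrcr, smul_smul, hS]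
  · simp [hcrc, smul_smul, hS]
  · simp only [Matrix.mul_neg, Matrix.smul_mul, Matrix.mul_smul, hcrcr, smul_smul]
    match_scalars
    field_simp
    linear_combination hz

theorem fromBlocks_mul_eq_self (hrc : r * c = S • 1) (hS : S ≠ 0) :
    fromBlocks (z • 1) (-r) c (-(z / S) • (c * r)) * fromBlocks 1 0 0 (S⁻¹ • (c * r))
      = fromBlocks (z • 1) (-r) c (-(z / S) • (c * r)) := by
  have hcrc : c * r * c = S • c := by rw [Matrix.mul_assoc, hrc, Matrix.mul_smul, Matrix.mul_one]
  have hrcr : r * (c * r) = S • r := by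
    rw [← Matrix.mul_assoc, hrc, Matrix.smul_mul, Matrix.one_mul]
  rw [fromBlocks_multiply]
  congr 1
  · simp
  · simp [hrcr, hS]
  · simp
  · simp only [Matrix.mul_zero, neg_smul, neg_mul, Matrix.mul_smul, ← Matrix.mul_assoc, smul_mul,
      hcrc, smul_smul, zero_add, neg_inj]
    match_scalars
    field_simp

end BlockRotation

theorem stmt_4_general (n : ℕ) (z : ℂ) (hz : z + starRingEnd ℂ z = 0)
    (v : Fin (n - 1) → ℂ) (hv : v ≠ 0)
    (hnorm : z * starRingEnd ℂ z + ∑ i, starRingEnd ℂ (v i) * v i = 1)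
    (A J : Matrix (Fin 1 ⊕ Fin (n - 1)) (Fin 1 ⊕ Fin (n - 1)) ℂ)
    (hA : A = Matrix.fromBlocks
      (Matrix.of fun _ _ => z)
      (Matrix.of fun _ j => -starRingEnd ℂ (v j))
      (Matrix.of fun i _ => v i)
      (Matrix.of fun i j =>
        -(v i * z * starRingEnd ℂ (v j)) / (∑ k, starRingEnd ℂ (v k) * v k)))
    (hJ : J = Matrix.fromBlocks 1 0 0
      (Matrix.of fun i j =>
        v i * starRingEnd ℂ (v j) / (∑ k, starRingEnd ℂ (v k) * v k))) :
    ∀ t : ℝ, NormedSpace.exp (t • A) = 1 - J + Real.cos t • J + Real.sin t • A := by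
  set S := ∑ k, starRingEnd ℂ (v k) * v k
  have hS : S ≠ 0 := by
    open scoped ComplexOrder in exact dotProduct_star_self_eq_zero.not.mpr hv
  -- `z` is purely imaginary, so `z * z = -|z|²`.
  have hzz : z * z = S - 1 := by linear_combination z * hz - hnorm
  set r := replicateRow (Fin 1) (star v)
  set c := replicateCol (Fin 1) v
  have hrc : r * c = S • 1 := replicateRow_mul_replicateCol_eq_smul_one _ _
  have hA' : A = fromBlocks (z • 1) (-r) c (-(z / S) • (c * r)) := by
    rw [hA]
    congr 1
    · ext i j
      simp [Subsingleton.elim i j]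
    · ext
      simp [r, c, Matrix.mul_apply]
      ring
  have hJ' : J = fromBlocks 1 0 0 (S⁻¹ • (c * r)) := by
    rw [hJ]
    congr 1
    ext
    simp [r, c, Matrix.mul_apply, div_eq_inv_mul]
  subst hA' hJ'
  exact exp_smul_eq_of_mul_self_eq_neg (fromBlocks_mul_self_eq_neg hrc hS hzz)
    (fromBlocks_mul_eq_self hrc hS)

/-- With `A` and `J` the `n×n` complex matrices defined in the context
(block form with blocks of sizes `1` and `n-1`), for every `t ∈ ℝ` one has `exp(t·A) = I − J + cos(t)·J + sin(t)·A`. -/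
theorem stmt_4 (n : ℕ) (hn : 2 ≤ n) (z : ℂ) (hz : z + starRingEnd ℂ z = 0)
    (v : Fin (n - 1) → ℂ) (hv : v ≠ 0)
    (hnorm : z * starRingEnd ℂ z + ∑ i, starRingEnd ℂ (v i) * v i = 1)
    (A J : Matrix (Fin 1 ⊕ Fin (n - 1)) (Fin 1 ⊕ Fin (n - 1)) ℂ)
    (hA : A = Matrix.fromBlocks
      (Matrix.of fun _ _ => z)
      (Matrix.of fun _ j => -starRingEnd ℂ (v j))
      (Matrix.of fun i _ => v i)
      (Matrix.of fun i j =>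
        -(v i * z * starRingEnd ℂ (v j)) / (∑ k, starRingEnd ℂ (v k) * v k)))
    (hJ : J = Matrix.fromBlocks 1 0 0
      (Matrix.of fun i j =>
        v i * starRingEnd ℂ (v j) / (∑ k, starRingEnd ℂ (v k) * v k))) :
    ∀ t : ℝ, NormedSpace.exp (t • A) = 1 - J + Real.cos t • J + Real.sin t • A :=
  stmt_4_general n z hz v hv hnorm A J hA hJ
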